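/- arXiv:2404.09300 — 4 statements merged into one kernel-verified Lean document; each statement's English description precedes it below -/
import Mathlib

section
/- Let X and Y be complex Banach spaces, let E, H : X → Y be bounded linear operators, and for each n ∈ ℕ let E_n, H_n : X_n → Y_n be bounded linear operators. Assume that E is bijective with bounded inverse, that every E_n is bijective with ‖E_n^{-1}‖ ≤ C for a constant C independent of n, that (E_n) converges to E, that H is a compact operator, and that (H_n) converges uniformly to H. Then (E_n + H_n) converges regularly to E + H. -/
open Filter Topology

section

variable {X Y : Type*} [NormedAddCommGroup X] [NormedSpace ℂ X] [CompleteSpace X]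
  [NormedAddCommGroup Y] [NormedSpace ℂ Y] [CompleteSpace Y]

/-- `Fₙ : Xₙ → Yₙ` converges (discretely) to `F : X → Y`:
`‖Fₙ(pₙ x) − qₙ(F x)‖ → 0` for every `x ∈ X`. -/
def Converges (Xn : ℕ → Submodule ℂ X) (Yn : ℕ → Submodule ℂ Y)
    (p : ℕ → X →L[ℂ] X) (q : ℕ → Y →L[ℂ] Y)
    (hpmem : ∀ n x, p n x ∈ Xn n)
    (Fn : ∀ n, (Xn n) →L[ℂ] (Yn n)) (F : X →L[ℂ] Y) : Prop :=
  ∀ x : X,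
    Tendsto (fun n => ‖((Fn n ⟨p n x, hpmem n x⟩ : Yn n) : Y) - q n (F x)‖) atTop (𝓝 0)

/-- A sequence `(yₙ)`, `yₙ ∈ Yₙ`, is `Q`-compact: every subsequence has a further
subsequence along which `‖yₙ − qₙ y‖ → 0` for some `y ∈ Y`. -/
def QCompact (Yn : ℕ → Submodule ℂ Y) (q : ℕ → Y →L[ℂ] Y)
    (y : ∀ n, Yn n) : Prop :=
  ∀ φ : ℕ → ℕ, StrictMono φ → ∃ ψ : ℕ → ℕ, StrictMono ψ ∧ ∃ z : Y,
    Tendsto (fun k => ‖((y (φ (ψ k)) : Y)) - q (φ (ψ k)) z‖) atTop (𝓝 0)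

/-- A sequence `(xₙ)`, `xₙ ∈ Xₙ`, is `P`-compact. -/
def PCompact (Xn : ℕ → Submodule ℂ X) (p : ℕ → X →L[ℂ] X)
    (x : ∀ n, Xn n) : Prop :=
  ∀ φ : ℕ → ℕ, StrictMono φ → ∃ ψ : ℕ → ℕ, StrictMono ψ ∧ ∃ z : X,
    Tendsto (fun k => ‖((x (φ (ψ k)) : X)) - p (φ (ψ k)) z‖) atTop (𝓝 0)

/-- `Fₙ` converges uniformly to `F`: the operator norms of `Fₙ ∘ pₙ − qₙ ∘ F`,
as operators from `X` to `Y`, tend to `0`. -/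
def ConvergesUniformly (Xn : ℕ → Submodule ℂ X) (Yn : ℕ → Submodule ℂ Y)
    (p : ℕ → X →L[ℂ] X) (q : ℕ → Y →L[ℂ] Y)
    (hpmem : ∀ n x, p n x ∈ Xn n)
    (Fn : ∀ n, (Xn n) →L[ℂ] (Yn n)) (F : X →L[ℂ] Y) : Prop :=
  Tendsto (fun n =>
      ‖((Yn n).subtypeL.comp (Fn n)).comp ((p n).codRestrict (Xn n) (hpmem n)) -
        (q n).comp F‖) atTop (𝓝 0)

/-- `Fₙ` converges regularly to `F`: `Fₙ → F` and every bounded sequence `(xₙ)` for which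
`(Fₙ xₙ)` is `Q`-compact is itself `P`-compact. -/
def ConvergesRegularly (Xn : ℕ → Submodule ℂ X) (Yn : ℕ → Submodule ℂ Y)
    (p : ℕ → X →L[ℂ] X) (q : ℕ → Y →L[ℂ] Y)
    (hpmem : ∀ n x, p n x ∈ Xn n)
    (Fn : ∀ n, (Xn n) →L[ℂ] (Yn n)) (F : X →L[ℂ] Y) : Prop :=
  Converges Xn Yn p q hpmem Fn F ∧
    ∀ x : ∀ n, Xn n, (∃ M : ℝ, ∀ n, ‖(x n : X)‖ ≤ M) →
      QCompact Yn q (fun n => Fn n (x n)) → PCompact Xn p x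

/-- Lemma 3.4 (lem1): if `E` is invertible, each `Eₙ` is invertible with uniformly bounded
inverses, `Eₙ` converges to `E`, `H` is compact and `Hₙ` converges uniformly to `H`,
then `Eₙ + Hₙ` converges regularly to `E + H`. -/
theorem regular_convergence_of_invertible_add_uniform
    (Xn : ℕ → Submodule ℂ X) (Yn : ℕ → Submodule ℂ Y)
    (hXc : ∀ n, IsClosed (Xn n : Set X)) (hYc : ∀ n, IsClosed (Yn n : Set Y))
    (p : ℕ → X →L[ℂ] X) (q : ℕ → Y →L[ℂ] Y)
    (hpmem : ∀ n x, p n x ∈ Xn n) (hqmem : ∀ n y, q n y ∈ Yn n)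
    (hpproj : ∀ n, ∀ x ∈ Xn n, p n x = x) (hqproj : ∀ n, ∀ y ∈ Yn n, q n y = y)
    (hpconv : ∀ x : X, Tendsto (fun n => ‖x - p n x‖) atTop (𝓝 0))
    (hqconv : ∀ y : Y, Tendsto (fun n => ‖y - q n y‖) atTop (𝓝 0))
    (E H : X →L[ℂ] Y) (En Hn : ∀ n, (Xn n) →L[ℂ] (Yn n))
    -- `E` is bijective with bounded inverse
    (Einv : Y →L[ℂ] X) (hE1 : ∀ x, Einv (E x) = x) (hE2 : ∀ y, E (Einv y) = y)
    -- every `Eₙ` is bijective with `‖Eₙ⁻¹‖ ≤ C`, `C` independent of `n`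
    (C : ℝ) (Eninv : ∀ n, (Yn n) →L[ℂ] (Xn n))
    (hEn1 : ∀ n xn, Eninv n (En n xn) = xn) (hEn2 : ∀ n yn, En n (Eninv n yn) = yn)
    (hEnC : ∀ n, ‖Eninv n‖ ≤ C)
    -- `Eₙ` converges to `E`
    (hEconv : Converges Xn Yn p q hpmem En E)
    -- `H` is compact
    (hHcpt : IsCompactOperator H)
    -- `Hₙ` converges uniformly to `H`
    (hHunif : ConvergesUniformly Xn Yn p q hpmem Hn H) :
    ConvergesRegularly Xn Yn p q hpmem (fun n => En n + Hn n) (E + H) := by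
  -- notation for the difference operators in the uniform convergence hypothesis
  set D : ∀ n, X →L[ℂ] Y := fun n =>
    ((Yn n).subtypeL.comp (Hn n)).comp ((p n).codRestrict (Xn n) (hpmem n)) -
      (q n).comp H with hD
  have hDapp : ∀ n (a : X), D n a = ((Hn n ⟨p n a, hpmem n a⟩ : Yn n) : Y) - q n (H a) := by
    intro n a; rfl
  -- uniform bound on the projections q
  obtain ⟨Cq, hCq⟩ : ∃ Cq, ∀ n, ‖q n‖ ≤ Cq := by
    apply banach_steinhaus
    intro y
    have h1 : Tendsto (fun n => ‖y - q n y‖) atTop (𝓝 0) := hqconv y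
    obtain ⟨B, hB⟩ := h1.bddAbove_range
    refine ⟨B + ‖y‖, fun n => ?_⟩
    have : ‖y - q n y‖ ≤ B := hB ⟨n, rfl⟩
    calc ‖q n y‖ = ‖y - (y - q n y)‖ := by rw [sub_sub_cancel]
      _ ≤ ‖y‖ + ‖y - q n y‖ := norm_sub_le _ _
      _ ≤ B + ‖y‖ := by linarith
  have hCq0 : 0 ≤ Cq := (norm_nonneg (q 0)).trans (hCq 0)
  have hC0 : 0 ≤ C := (norm_nonneg (Eninv 0)).trans (hEnC 0)
  -- key contraction estimate for Eninv
  have hEninv_lip : ∀ n (u v : Yn n), ‖((Eninv n u : Xn n) : X) - ((Eninv n v : Xn n) : X)‖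
      ≤ C * ‖(u : Y) - (v : Y)‖ := by
    intro n u v
    have : ((Eninv n u : Xn n) : X) - ((Eninv n v : Xn n) : X)
        = ((Eninv n (u - v) : Xn n) : X) := by
      push_cast [map_sub]; ring
    rw [this]
    calc ‖((Eninv n (u - v) : Xn n) : X)‖ = ‖Eninv n (u - v)‖ := Submodule.norm_coe _
      _ ≤ ‖Eninv n‖ * ‖u - v‖ := (Eninv n).le_opNorm _
      _ ≤ C * ‖u - v‖ := by
          exact mul_le_mul_of_nonneg_right (hEnC n) (norm_nonneg _)
      _ = C * ‖(u : Y) - (v : Y)‖ := by norm_cast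
  constructor
  · -- convergence of the sum
    intro a
    apply squeeze_zero (fun n => norm_nonneg _)
      (g := fun n => ‖((En n ⟨p n a, hpmem n a⟩ : Yn n) : Y) - q n (E a)‖ + ‖D n‖ * ‖a‖)
    · intro n
      have key : (((En n + Hn n) ⟨p n a, hpmem n a⟩ : Yn n) : Y) - q n ((E + H) a)
          = (((En n ⟨p n a, hpmem n a⟩ : Yn n) : Y) - q n (E a)) + D n a := by
        rw [hDapp]
        push_cast [ContinuousLinearMap.add_apply, map_add]
        abel
      rw [key]
      refine (norm_add_le _ _).trans ?_
      gcongr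
      exact (D n).le_opNorm a
    · have h2 : Tendsto (fun n => ‖D n‖ * ‖a‖) atTop (𝓝 (0 * ‖a‖)) :=
        hHunif.mul_const _
      rw [zero_mul] at h2
      simpa using (hEconv a).add h2
  · -- regularity
    rintro x ⟨M, hM⟩ hQ φ hφ
    have hM0 : 0 ≤ M := le_trans (norm_nonneg _) (hM 0)
    obtain ⟨ψ1, hψ1, y, hy⟩ := hQ φ hφ
    -- compactness of H on the bounded sequence
    have hK : IsCompact (closure (H '' Metric.closedBall (0 : X) M)) :=
      hHcpt.isCompact_closure_image_of_bounded (Metric.isBounded_closedBall)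
    have hmem : ∀ k, H ((x (φ (ψ1 k)) : Xn _) : X) ∈ closure (H '' Metric.closedBall (0 : X) M) := by
      intro k
      exact subset_closure ⟨_, Metric.mem_closedBall.2 (by simpa using hM (φ (ψ1 k))), rfl⟩
    obtain ⟨z, _, ψ2, hψ2, hu⟩ := hK.tendsto_subseq hmem
    refine ⟨ψ1 ∘ ψ2, hψ1.comp hψ2, Einv (y - z), ?_⟩
    set w := Einv (y - z) with hw
    have hEw : E w = y - z := hE2 _
    set m : ℕ → ℕ := fun k => φ (ψ1 (ψ2 k)) with hm
    have hmmono : StrictMono m := hφ.comp (hψ1.comp hψ2)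
    -- the four vanishing quantities
    have t1 : Tendsto (fun k => ‖(((En (m k) + Hn (m k)) (x (m k)) : Yn (m k)) : Y)
        - q (m k) y‖) atTop (𝓝 0) := hy.comp hψ2.tendsto_atTop
    have t2 : Tendsto (fun k => ‖D (m k)‖ * M) atTop (𝓝 0) := by
      have := (hHunif.comp hmmono.tendsto_atTop).mul_const M
      simpa using this
    have t3 : Tendsto (fun k => Cq * ‖H ((x (m k) : Xn _) : X) - z‖) atTop (𝓝 0) := by
      have h3 : Tendsto (fun k => ‖H ((x (m k) : Xn _) : X) - z‖) atTop (𝓝 0) := by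
        rw [← tendsto_iff_norm_sub_tendsto_zero]
        exact hu
      simpa using h3.const_mul Cq
    have t4 : Tendsto (fun k => ‖((En (m k) ⟨p (m k) w, hpmem (m k) w⟩ : Yn (m k)) : Y)
        - q (m k) (E w)‖) atTop (𝓝 0) := (hEconv w).comp hmmono.tendsto_atTop
    apply squeeze_zero (fun k => norm_nonneg _)
      (g := fun k => C * (‖(((En (m k) + Hn (m k)) (x (m k)) : Yn (m k)) : Y) - q (m k) y‖
        + (‖D (m k)‖ * M + Cq * ‖H ((x (m k) : Xn _) : X) - z‖))
        + C * ‖((En (m k) ⟨p (m k) w, hpmem (m k) w⟩ : Yn (m k)) : Y) - q (m k) (E w)‖)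
    · intro k
      set n := m k with hn
      set a : X := ((x n : Xn n) : X) with ha
      have hpa : (⟨p n a, hpmem n a⟩ : Xn n) = x n := Subtype.ext (hpproj n a (x n).2)
      -- the element q n (E w) as an element of Yn n
      set v : Yn n := ⟨q n (E w), hqmem n (E w)⟩ with hv
      have step1 : ‖a - p n w‖ ≤ ‖((Eninv n (En n (x n)) : Xn n) : X) - ((Eninv n v : Xn n) : X)‖
          + ‖((Eninv n v : Xn n) : X) - ((Eninv n (En n ⟨p n w, hpmem n w⟩) : Xn n) : X)‖ := by
        have e1 : ((Eninv n (En n (x n)) : Xn n) : X) = a := by rw [hEn1]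
        have e2 : ((Eninv n (En n ⟨p n w, hpmem n w⟩) : Xn n) : X) = p n w := by rw [hEn1]
        calc ‖a - p n w‖ = ‖(a - ((Eninv n v : Xn n) : X)) + (((Eninv n v : Xn n) : X) - p n w)‖ := by
              rw [sub_add_sub_cancel]
          _ ≤ ‖a - ((Eninv n v : Xn n) : X)‖ + ‖((Eninv n v : Xn n) : X) - p n w‖ := norm_add_le _ _
          _ = _ := by rw [e1, e2]
      have step2 : ‖((Eninv n (En n (x n)) : Xn n) : X) - ((Eninv n v : Xn n) : X)‖
          ≤ C * (‖(((En n + Hn n) (x n) : Yn n) : Y) - q n y‖ + (‖D n‖ * M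
            + Cq * ‖H a - z‖)) := by
        refine (hEninv_lip n _ _).trans ?_
        gcongr C * ?_
        have hdec : ((En n (x n) : Yn n) : Y) - (v : Y)
            = ((((En n + Hn n) (x n) : Yn n) : Y) - q n y)
              - (D n a + q n (H a - z)) := by
          rw [hDapp, hv]
          push_cast [ContinuousLinearMap.add_apply, map_sub]
          rw [hpa, hEw, map_sub]
          abel
        rw [hdec]
        refine (norm_sub_le _ _).trans ?_
        gcongr
        refine (norm_add_le _ _).trans ?_
        gcongr
        · calc ‖D n a‖ ≤ ‖D n‖ * ‖a‖ := (D n).le_opNorm a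
            _ ≤ ‖D n‖ * M := by
                exact mul_le_mul_of_nonneg_left (by simpa [ha] using hM n) (norm_nonneg _)
        · exact (q n).le_opNorm _ |>.trans (mul_le_mul_of_nonneg_right (hCq n) (norm_nonneg _))
      have step3 : ‖((Eninv n v : Xn n) : X) - ((Eninv n (En n ⟨p n w, hpmem n w⟩) : Xn n) : X)‖
          ≤ C * ‖((En n ⟨p n w, hpmem n w⟩ : Yn n) : Y) - q n (E w)‖ := by
        refine (hEninv_lip n _ _).trans ?_
        rw [hv]
        simp only [norm_sub_rev]
        exact le_rfl
      calc ‖a - p n w‖ ≤ _ := step1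
        _ ≤ _ := add_le_add step2 step3
    · have := (t1.add (t2.add t3)).const_mul C
      have h4 := t4.const_mul C
      simpa using this.add h4


end
end

section
/- Let X and Y be complex Banach spaces, let E, H : X → Y be bounded linear operators, and for each n ∈ ℕ let E_n : X_n → Y_n be bounded linear operators, and define H_n : X_n → Y_n as the restriction of q_n ∘ H to X_n. Assume that E is bijective with bounded inverse, that every E_n is bijective with ‖E_n^{-1}‖ ≤ C for a constant C independent of n, that (E_n) converges to E, and that H is a compact operator. Then (E_n + H_n) converges regularly to E + H. -/
open Filter Topology

section

variable {X Y : Type*} [NormedAddCommGroup X] [NormedSpace ℂ X] [CompleteSpace X]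
  [NormedAddCommGroup Y] [NormedSpace ℂ Y] [CompleteSpace Y]

/-- Lemma 3.5 (lem2): if `E` is invertible, each `Eₙ` is invertible with uniformly bounded
inverses, `Eₙ` converges to `E`, `H` is compact and `Hₙ := qₙ ∘ H` restricted to `Xₙ`,
then `Eₙ + Hₙ` converges regularly to `E + H`. -/
theorem regular_convergence_of_invertible_add_projected
    (Xn : ℕ → Submodule ℂ X) (Yn : ℕ → Submodule ℂ Y)
    (hXc : ∀ n, IsClosed (Xn n : Set X)) (hYc : ∀ n, IsClosed (Yn n : Set Y))
    (p : ℕ → X →L[ℂ] X) (q : ℕ → Y →L[ℂ] Y)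
    (hpmem : ∀ n x, p n x ∈ Xn n) (hqmem : ∀ n y, q n y ∈ Yn n)
    (hpproj : ∀ n, ∀ x ∈ Xn n, p n x = x) (hqproj : ∀ n, ∀ y ∈ Yn n, q n y = y)
    (hpconv : ∀ x : X, Tendsto (fun n => ‖x - p n x‖) atTop (𝓝 0))
    (hqconv : ∀ y : Y, Tendsto (fun n => ‖y - q n y‖) atTop (𝓝 0))
    (E H : X →L[ℂ] Y) (En : ∀ n, (Xn n) →L[ℂ] (Yn n))
    -- `E` is bijective with bounded inverse
    (Einv : Y →L[ℂ] X) (hE1 : ∀ x, Einv (E x) = x) (hE2 : ∀ y, E (Einv y) = y)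
    -- every `Eₙ` is bijective with `‖Eₙ⁻¹‖ ≤ C`, `C` independent of `n`
    (C : ℝ) (Eninv : ∀ n, (Yn n) →L[ℂ] (Xn n))
    (hEn1 : ∀ n xn, Eninv n (En n xn) = xn) (hEn2 : ∀ n yn, En n (Eninv n yn) = yn)
    (hEnC : ∀ n, ‖Eninv n‖ ≤ C)
    -- `Eₙ` converges to `E`
    (hEconv : Converges Xn Yn p q hpmem En E)
    -- `H` is compact
    (hHcpt : IsCompactOperator H)
    -- `Hₙ` is the restriction of `qₙ ∘ H` to `Xₙ`
    (Hn : ∀ n, (Xn n) →L[ℂ] (Yn n))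
    (hHn : ∀ n, Hn n =
      (((q n).comp H).comp (Xn n).subtypeL).codRestrict (Yn n)
        (fun xn => hqmem n (H (xn : X)))) :
    ConvergesRegularly Xn Yn p q hpmem (fun n => En n + Hn n) (E + H) := by
  -- uniform bound on the projections q
  obtain ⟨Q, hQ⟩ : ∃ Q, ∀ n, ‖q n‖ ≤ Q := by
    apply banach_steinhaus
    intro y
    obtain ⟨B, hB⟩ := (hqconv y).bddAbove_range
    refine ⟨B + ‖y‖, fun n => ?_⟩
    have h1 : ‖y - q n y‖ ≤ B := hB ⟨n, rfl⟩
    calc ‖q n y‖ = ‖(y - q n y) - y‖ := by rw [sub_sub_cancel_left, norm_neg]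
    _ ≤ ‖y - q n y‖ + ‖y‖ := norm_sub_le _ _
    _ ≤ B + ‖y‖ := by linarith
  have hQ0 : (0:ℝ) ≤ Q := (norm_nonneg (q 0)).trans (hQ 0)
  have hC0 : (0:ℝ) ≤ C := (norm_nonneg (Eninv 0)).trans (hEnC 0)
  -- value of Hn
  have hHval : ∀ n (u : Xn n), ((Hn n u : Yn n) : Y) = q n (H (u : X)) := by
    intro n u
    rw [hHn n]
    rfl
  constructor
  · -- convergence
    intro x
    have hbound : ∀ n : ℕ,
        ‖(((En n + Hn n) ⟨p n x, hpmem n x⟩ : Yn n) : Y) - q n ((E + H) x)‖ ≤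
          ‖((En n ⟨p n x, hpmem n x⟩ : Yn n) : Y) - q n (E x)‖ + Q * (‖H‖ * ‖x - p n x‖) := by
      intro n
      set u : Xn n := ⟨p n x, hpmem n x⟩ with hu
      have hexp : (((En n + Hn n) u : Yn n) : Y) - q n ((E + H) x) =
          (((En n u : Yn n) : Y) - q n (E x)) + q n (H (p n x) - H x) := by
        have h1 : (((En n + Hn n) u : Yn n) : Y) = ((En n u : Yn n) : Y) + q n (H (p n x)) := by
          have := hHval n u
          simp only [ContinuousLinearMap.add_apply, Submodule.coe_add, this]
          rfl
        rw [h1, ContinuousLinearMap.add_apply, map_add (q n), map_sub (q n)]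
        abel
      rw [hexp]
      refine le_trans (norm_add_le _ _) (add_le_add le_rfl ?_)
      calc ‖q n (H (p n x) - H x)‖ ≤ ‖q n‖ * ‖H (p n x) - H x‖ :=
            ContinuousLinearMap.le_opNorm _ _
      _ ≤ Q * ‖H (p n x) - H x‖ := mul_le_mul_of_nonneg_right (hQ n) (norm_nonneg _)
      _ ≤ Q * (‖H‖ * ‖x - p n x‖) := by
            refine mul_le_mul_of_nonneg_left ?_ hQ0
            calc ‖H (p n x) - H x‖ = ‖H (p n x - x)‖ := by rw [map_sub]
            _ ≤ ‖H‖ * ‖p n x - x‖ := H.le_opNorm _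
            _ = ‖H‖ * ‖x - p n x‖ := by rw [norm_sub_rev]
    have hlim : Tendsto (fun n =>
        ‖((En n ⟨p n x, hpmem n x⟩ : Yn n) : Y) - q n (E x)‖ + Q * (‖H‖ * ‖x - p n x‖))
        atTop (𝓝 0) := by
      have := (hEconv x).add (((hpconv x).const_mul ‖H‖).const_mul Q)
      simpa [mul_comm, mul_assoc, mul_left_comm] using this
    exact squeeze_zero (fun n => norm_nonneg _) hbound hlim
  · -- regularity
    rintro x ⟨M, hM⟩ hQc φ hφ
    obtain ⟨ψ₁, hψ₁, z₁, h₁⟩ := hQc φ hφ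
    -- extract convergent subsequence of H (x n) using compactness
    have hK : IsCompact (closure (H '' Metric.closedBall 0 M)) :=
      IsCompactOperator.isCompact_closure_image_closedBall (𝕜₁ := ℂ)
        (f := (H : X →ₗ[ℂ] Y)) hHcpt M
    have hmem : ∀ k, H ((x (φ (ψ₁ k)) : X)) ∈ closure (H '' Metric.closedBall 0 M) := by
      intro k
      exact subset_closure ⟨_, Metric.mem_closedBall.2 (by simpa using hM (φ (ψ₁ k))), rfl⟩
    obtain ⟨w, -, ψ₂, hψ₂, h₂⟩ := hK.tendsto_subseq hmem
    refine ⟨ψ₁ ∘ ψ₂, hψ₁.comp hψ₂, Einv (z₁ - w), ?_⟩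
    set z : X := Einv (z₁ - w) with hz
    have hEz : E z = z₁ - w := hE2 _
    set σ : ℕ → ℕ := fun k => φ (ψ₁ (ψ₂ k)) with hσ
    -- the key inequality
    have hbound : ∀ k : ℕ,
        ‖((x (σ k) : X)) - p (σ k) z‖ ≤
          C * (‖(((En (σ k) + Hn (σ k)) (x (σ k)) : Yn (σ k)) : Y) - q (σ k) z₁‖ +
            Q * ‖H ((x (σ k) : X)) - w‖ +
            ‖((En (σ k) ⟨p (σ k) z, hpmem (σ k) z⟩ : Yn (σ k)) : Y) - q (σ k) (E z)‖) := by
      intro k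
      set n := σ k with hn
      set u : Xn n := x n with hu
      set v : Xn n := ⟨p n z, hpmem n z⟩ with hv
      have step1 : ((u : X)) - p n z = ((u - v : Xn n) : X) := rfl
      have step2 : u - v = Eninv n (En n (u - v)) := (hEn1 n _).symm
      have step3 : ‖u - v‖ ≤ C * ‖En n (u - v)‖ := by
        conv_lhs => rw [step2]
        calc ‖Eninv n (En n (u - v))‖ ≤ ‖Eninv n‖ * ‖En n (u - v)‖ :=
              ContinuousLinearMap.le_opNorm _ _
        _ ≤ C * ‖En n (u - v)‖ := mul_le_mul_of_nonneg_right (hEnC n) (norm_nonneg _)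
      -- algebraic identity in Y
      have hid : ((En n (u - v) : Yn n) : Y) =
          ((((En n + Hn n) u : Yn n) : Y) - q n z₁) - q n (H (u : X) - w) -
            (((En n v : Yn n) : Y) - q n (E z)) := by
        have hFu : (((En n + Hn n) u : Yn n) : Y) = ((En n u : Yn n) : Y) + q n (H (u : X)) := by
          simp only [ContinuousLinearMap.add_apply, Submodule.coe_add, hHval n u]
        have hqEz : q n (E z) = q n z₁ - q n w := by rw [hEz, map_sub]
        rw [map_sub (En n), Submodule.coe_sub, hFu, hqEz, map_sub (q n)]
        abel
      have step4 : ‖En n (u - v)‖ ≤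
          ‖(((En n + Hn n) u : Yn n) : Y) - q n z₁‖ + Q * ‖H ((u : X)) - w‖ +
            ‖((En n v : Yn n) : Y) - q n (E z)‖ := by
        rw [← Submodule.norm_coe, hid]
        refine le_trans (norm_sub_le _ _) (add_le_add ?_ le_rfl)
        refine le_trans (norm_sub_le _ _) (add_le_add le_rfl ?_)
        calc ‖q n (H (u : X) - w)‖ ≤ ‖q n‖ * ‖H (u : X) - w‖ :=
              ContinuousLinearMap.le_opNorm _ _
        _ ≤ Q * ‖H (u : X) - w‖ := mul_le_mul_of_nonneg_right (hQ n) (norm_nonneg _)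
      calc ‖((u : X)) - p n z‖ = ‖u - v‖ := by rw [step1, Submodule.norm_coe]
      _ ≤ C * ‖En n (u - v)‖ := step3
      _ ≤ _ := mul_le_mul_of_nonneg_left step4 hC0
    -- the bound tends to zero
    have ha : Tendsto (fun k =>
        ‖(((En (σ k) + Hn (σ k)) (x (σ k)) : Yn (σ k)) : Y) - q (σ k) z₁‖) atTop (𝓝 0) :=
      h₁.comp hψ₂.tendsto_atTop
    have hb : Tendsto (fun k => ‖H ((x (σ k) : X)) - w‖) atTop (𝓝 0) := by
      have := tendsto_iff_norm_sub_tendsto_zero.mp h₂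
      exact this
    have hc : Tendsto (fun k =>
        ‖((En (σ k) ⟨p (σ k) z, hpmem (σ k) z⟩ : Yn (σ k)) : Y) - q (σ k) (E z)‖)
        atTop (𝓝 0) :=
      (hEconv z).comp ((hφ.comp (hψ₁.comp hψ₂)).tendsto_atTop)
    have hlim : Tendsto (fun k =>
        C * (‖(((En (σ k) + Hn (σ k)) (x (σ k)) : Yn (σ k)) : Y) - q (σ k) z₁‖ +
          Q * ‖H ((x (σ k) : X)) - w‖ +
          ‖((En (σ k) ⟨p (σ k) z, hpmem (σ k) z⟩ : Yn (σ k)) : Y) - q (σ k) (E z)‖))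
        atTop (𝓝 0) := by
      have := ((ha.add (hb.const_mul Q)).add hc).const_mul C
      simpa using this
    exact squeeze_zero (fun k => norm_nonneg _) hbound hlim

end
end

section
/- Let X and Y be complex Banach spaces, let H : X → Y be a compact bounded linear operator, and for each n ∈ ℕ let H_n : X_n → Y_n be bounded linear operators. If (H_n) converges uniformly to H, then (H_n) converges compactly to H; that is, for every sequence (x_n) with x_n ∈ X_n and ‖x_n‖ ≤ 1 for all n, and for every subsequence of (H_n x_n), there exist a further subsequence and an element y ∈ Y such that ‖H_n x_n − q_n y‖ → 0 along that further subsequence. -/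
/-! The compact operator `H` maps the unit ball into a compact set `K`. For `‖xₙ‖ ≤ 1`, uniform
convergence gives `‖Hₙ xₙ − qₙ (H xₙ)‖ → 0`. Along a subsequence `H xₙ → z ∈ K`, and since the
`qₙ` converge pointwise they are uniformly bounded (Banach–Steinhaus), so `qₙ (H xₙ) − qₙ z → 0`
along it as well. -/

open Filter Topology

section

variable {X Y : Type*} [NormedAddCommGroup X] [NormedSpace ℂ X] [CompleteSpace X]
  [NormedAddCommGroup Y] [NormedSpace ℂ Y] [CompleteSpace Y]

/-- `Fₙ` converges compactly to `F`: `Fₙ → F` and `(Fₙ xₙ)` is `Q`-compact for every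
sequence `(xₙ)` with `xₙ ∈ Xₙ` and `‖xₙ‖ ≤ 1` for all `n`. -/
def ConvergesCompactly (Xn : ℕ → Submodule ℂ X) (Yn : ℕ → Submodule ℂ Y)
    (p : ℕ → X →L[ℂ] X) (q : ℕ → Y →L[ℂ] Y)
    (hpmem : ∀ n x, p n x ∈ Xn n)
    (Fn : ∀ n, (Xn n) →L[ℂ] (Yn n)) (F : X →L[ℂ] Y) : Prop :=
  Converges Xn Yn p q hpmem Fn F ∧
    ∀ x : ∀ n, Xn n, (∀ n, ‖(x n : X)‖ ≤ 1) → QCompact Yn q (fun n => Fn n (x n))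

end

theorem exists_norm_le_of_tendsto_apply {𝕜 E F : Type*} [NontriviallyNormedField 𝕜]
    [NormedAddCommGroup E] [NormedSpace 𝕜 E] [CompleteSpace E]
    [NormedAddCommGroup F] [NormedSpace 𝕜 F]
    {g : ℕ → E →L[𝕜] F} {f : E → F} (h : ∀ x, Tendsto (fun n => g n x) atTop (𝓝 (f x))) :
    ∃ C, ∀ n, ‖g n‖ ≤ C :=
  banach_steinhaus fun x =>
    let ⟨C, hC⟩ := (h x).norm.bddAbove_range
    ⟨C, fun n => hC ⟨n, rfl⟩⟩

section Discretization

variable {X Y : Type*} [NormedAddCommGroup X] [NormedSpace ℂ X]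
  [NormedAddCommGroup Y] [NormedSpace ℂ Y]
  {Xn : ℕ → Submodule ℂ X} {Yn : ℕ → Submodule ℂ Y} {p : ℕ → X →L[ℂ] X} {q : ℕ → Y →L[ℂ] Y}

def consistencyError (Xn : ℕ → Submodule ℂ X) (Yn : ℕ → Submodule ℂ Y)
    (p : ℕ → X →L[ℂ] X) (q : ℕ → Y →L[ℂ] Y) (hpmem : ∀ n x, p n x ∈ Xn n)
    (Fn : ∀ n, (Xn n) →L[ℂ] (Yn n)) (F : X →L[ℂ] Y) (n : ℕ) : X →L[ℂ] Y :=
  ((Yn n).subtypeL.comp (Fn n)).comp ((p n).codRestrict (Xn n) (hpmem n)) - (q n).comp F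

variable {hpmem : ∀ n x, p n x ∈ Xn n} {Fn : ∀ n, (Xn n) →L[ℂ] (Yn n)} {F : X →L[ℂ] Y}

theorem norm_apply_sub_le_consistencyError (n : ℕ) (x : X) :
    ‖((Fn n ⟨p n x, hpmem n x⟩ : Yn n) : Y) - q n (F x)‖ ≤
      ‖consistencyError Xn Yn p q hpmem Fn F n‖ * ‖x‖ :=
  (consistencyError Xn Yn p q hpmem Fn F n).le_opNorm x

theorem ConvergesUniformly.tendsto_norm_consistencyError
    (h : ConvergesUniformly Xn Yn p q hpmem Fn F) :
    Tendsto (fun n => ‖consistencyError Xn Yn p q hpmem Fn F n‖) atTop (𝓝 0) :=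
  h

theorem ConvergesUniformly.converges (h : ConvergesUniformly Xn Yn p q hpmem Fn F) :
    Converges Xn Yn p q hpmem Fn F := fun x =>
  squeeze_zero (fun _ => norm_nonneg _) (fun n => norm_apply_sub_le_consistencyError n x)
    (by simpa only [zero_mul] using h.tendsto_norm_consistencyError.mul_const ‖x‖)

theorem ConvergesUniformly.tendsto_norm_apply_sub
    (h : ConvergesUniformly Xn Yn p q hpmem Fn F) (hpproj : ∀ n, ∀ x ∈ Xn n, p n x = x)
    {x : ∀ n, Xn n} {M : ℝ} (hx : ∀ n, ‖(x n : X)‖ ≤ M) :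
    Tendsto (fun n => ‖((Fn n (x n) : Yn n) : Y) - q n (F (x n))‖) atTop (𝓝 0) := by
  have hpx : ∀ n, (⟨p n (x n), hpmem n (x n)⟩ : Xn n) = x n := fun n =>
    Subtype.ext (hpproj n _ (x n).2)
  refine squeeze_zero (fun _ => norm_nonneg _) (fun n => ?_)
    (by simpa only [zero_mul] using h.tendsto_norm_consistencyError.mul_const M)
  calc ‖((Fn n (x n) : Yn n) : Y) - q n (F (x n))‖
      ≤ ‖consistencyError Xn Yn p q hpmem Fn F n‖ * ‖(x n : X)‖ := by
        simpa only [hpx] using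
          norm_apply_sub_le_consistencyError (hpmem := hpmem) (Fn := Fn) (F := F) n (x n : X)
    _ ≤ ‖consistencyError Xn Yn p q hpmem Fn F n‖ * M := by gcongr; exact hx n

theorem qCompact_of_tendsto_norm_sub {y : ∀ n, Yn n} {w : ℕ → Y} {K : Set Y} {C : ℝ}
    (hK : IsCompact K) (hwK : ∀ n, w n ∈ K) (hqC : ∀ n, ‖q n‖ ≤ C)
    (hyw : Tendsto (fun n => ‖(y n : Y) - q n (w n)‖) atTop (𝓝 0)) : QCompact Yn q y := by
  intro φ hφ
  obtain ⟨z, -, ψ, hψ, hwz⟩ := hK.tendsto_subseq fun k => hwK (φ k)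
  have hbound := (hyw.comp (hφ.comp hψ).tendsto_atTop).add
    ((tendsto_iff_norm_sub_tendsto_zero.1 hwz).const_mul C)
  rw [mul_zero, add_zero] at hbound
  refine ⟨ψ, hψ, z, squeeze_zero (fun _ => norm_nonneg _) (fun k => ?_) hbound⟩
  set n := φ (ψ k)
  calc ‖(y n : Y) - q n z‖ ≤ ‖(y n : Y) - q n (w n)‖ + ‖q n (w n - z)‖ := by
        simpa only [map_sub] using norm_sub_le_norm_sub_add_norm_sub (y n : Y) (q n (w n)) (q n z)
    _ ≤ ‖(y n : Y) - q n (w n)‖ + C * ‖w n - z‖ := by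
        gcongr
        exact (q n).le_of_opNorm_le (hqC n) _

end Discretization

section

variable {X Y : Type*} [NormedAddCommGroup X] [NormedSpace ℂ X] [CompleteSpace X]
  [NormedAddCommGroup Y] [NormedSpace ℂ Y] [CompleteSpace Y]

theorem compact_convergence_of_uniform_convergence_general
    (Xn : ℕ → Submodule ℂ X) (Yn : ℕ → Submodule ℂ Y)
    (p : ℕ → X →L[ℂ] X) (q : ℕ → Y →L[ℂ] Y)
    (hpmem : ∀ n x, p n x ∈ Xn n)
    (hpproj : ∀ n, ∀ x ∈ Xn n, p n x = x)
    (hqconv : ∀ y : Y, Tendsto (fun n => ‖y - q n y‖) atTop (𝓝 0))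
    (H : X →L[ℂ] Y) (Hn : ∀ n, (Xn n) →L[ℂ] (Yn n))
    (hHcpt : IsCompactOperator H)
    (hHunif : ConvergesUniformly Xn Yn p q hpmem Hn H) :
    ConvergesCompactly Xn Yn p q hpmem Hn H := by
  obtain ⟨C, hqC⟩ := exists_norm_le_of_tendsto_apply (g := q) (f := fun y => y) fun y =>
    tendsto_iff_norm_sub_tendsto_zero.2 (by simpa only [norm_sub_rev] using hqconv y)
  obtain ⟨K, hK, hHK⟩ := hHcpt.image_closedBall_subset_compact (f := (H : X →ₗ[ℂ] Y)) 1
  exact ⟨hHunif.converges, fun x hx =>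
    qCompact_of_tendsto_norm_sub hK (fun n => hHK ⟨x n, mem_closedBall_zero_iff.2 (hx n), rfl⟩)
      hqC (hHunif.tendsto_norm_apply_sub hpproj hx)⟩

/-- If `H` is compact and `Hₙ` converges uniformly to `H`, then `Hₙ` converges compactly
to `H`. -/
theorem compact_convergence_of_uniform_convergence
    (Xn : ℕ → Submodule ℂ X) (Yn : ℕ → Submodule ℂ Y)
    (hXc : ∀ n, IsClosed (Xn n : Set X)) (hYc : ∀ n, IsClosed (Yn n : Set Y))
    (p : ℕ → X →L[ℂ] X) (q : ℕ → Y →L[ℂ] Y)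
    (hpmem : ∀ n x, p n x ∈ Xn n) (hqmem : ∀ n y, q n y ∈ Yn n)
    (hpproj : ∀ n, ∀ x ∈ Xn n, p n x = x) (hqproj : ∀ n, ∀ y ∈ Yn n, q n y = y)
    (hpconv : ∀ x : X, Tendsto (fun n => ‖x - p n x‖) atTop (𝓝 0))
    (hqconv : ∀ y : Y, Tendsto (fun n => ‖y - q n y‖) atTop (𝓝 0))
    (H : X →L[ℂ] Y) (Hn : ∀ n, (Xn n) →L[ℂ] (Yn n))
    (hHcpt : IsCompactOperator H)
    (hHunif : ConvergesUniformly Xn Yn p q hpmem Hn H) :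
    ConvergesCompactly Xn Yn p q hpmem Hn H :=
  compact_convergence_of_uniform_convergence_general Xn Yn p q hpmem hpproj hqconv H Hn hHcpt hHunif

end
end

section
/- Let X and Y be complex Banach spaces and let H : X → Y be a compact bounded linear operator. For each n ∈ ℕ define H_n : X_n → Y_n as the restriction of q_n ∘ H to X_n. Then (H_n) converges compactly to H; that is, (H_n) converges to H, and for every sequence (x_n) with x_n ∈ X_n and ‖x_n‖ ≤ 1 for all n, and for every subsequence of (H_n x_n), there exist a further subsequence and an element y ∈ Y such that ‖H_n x_n − q_n y‖ → 0 along that further subsequence. -/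
open Filter Topology

section

variable {X Y : Type*} [NormedAddCommGroup X] [NormedSpace ℂ X] [CompleteSpace X]
  [NormedAddCommGroup Y] [NormedSpace ℂ Y] [CompleteSpace Y]

/-- If `H` is compact and `Hₙ` is the restriction of `qₙ ∘ H` to `Xₙ`, then `Hₙ`
converges compactly to `H`. -/
theorem compact_convergence_of_projected_operators
    (Xn : ℕ → Submodule ℂ X) (Yn : ℕ → Submodule ℂ Y)
    (hXc : ∀ n, IsClosed (Xn n : Set X)) (hYc : ∀ n, IsClosed (Yn n : Set Y))
    (p : ℕ → X →L[ℂ] X) (q : ℕ → Y →L[ℂ] Y)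
    (hpmem : ∀ n x, p n x ∈ Xn n) (hqmem : ∀ n y, q n y ∈ Yn n)
    (hpproj : ∀ n, ∀ x ∈ Xn n, p n x = x) (hqproj : ∀ n, ∀ y ∈ Yn n, q n y = y)
    (hpconv : ∀ x : X, Tendsto (fun n => ‖x - p n x‖) atTop (𝓝 0))
    (hqconv : ∀ y : Y, Tendsto (fun n => ‖y - q n y‖) atTop (𝓝 0))
    (H : X →L[ℂ] Y)
    (hHcpt : IsCompactOperator H)
    (Hn : ∀ n, (Xn n) →L[ℂ] (Yn n))
    (hHn : ∀ n, Hn n =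
      (((q n).comp H).comp (Xn n).subtypeL).codRestrict (Yn n)
        (fun xn => hqmem n (H (xn : X)))) :
    ConvergesCompactly Xn Yn p q hpmem Hn H := by
  -- uniform bound on the projections q n via Banach-Steinhaus
  obtain ⟨C, hC⟩ : ∃ C, ∀ n, ‖q n‖ ≤ C := by
    apply banach_steinhaus
    intro y
    have h : Tendsto (fun n => q n y) atTop (𝓝 y) := by
      rw [tendsto_iff_norm_sub_tendsto_zero]
      simpa [norm_sub_rev] using hqconv y
    obtain ⟨C, hC⟩ := h.norm.bddAbove_range
    exact ⟨C, fun n => hC ⟨n, rfl⟩⟩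
  have hCn : ∀ n (v : Y), ‖q n v‖ ≤ C * ‖v‖ := fun n v =>
    (q n).le_of_opNorm_le (hC n) v
  have key : ∀ n (xn : Xn n), ((Hn n xn : Yn n) : Y) = q n (H (xn : X)) := by
    intro n xn
    rw [hHn n]
    rfl
  constructor
  · -- convergence
    intro x
    have hHx : Tendsto (fun n => ‖H (p n x) - H x‖) atTop (𝓝 0) := by
      rw [← tendsto_iff_norm_sub_tendsto_zero]
      have hp : Tendsto (fun n => p n x) atTop (𝓝 x) := by
        rw [tendsto_iff_norm_sub_tendsto_zero]
        simpa [norm_sub_rev] using hpconv x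
      exact (H.continuous.tendsto x).comp hp
    have hbound : ∀ n,
        ‖((Hn n ⟨p n x, hpmem n x⟩ : Yn n) : Y) - q n (H x)‖ ≤ C * ‖H (p n x) - H x‖ := by
      intro n
      rw [key]
      calc ‖q n (H (p n x)) - q n (H x)‖ = ‖q n (H (p n x) - H x)‖ := by
            rw [map_sub]
        _ ≤ C * ‖H (p n x) - H x‖ := hCn n _
    have : Tendsto (fun n => C * ‖H (p n x) - H x‖) atTop (𝓝 0) := by
      simpa using hHx.const_mul C
    exact squeeze_zero (fun n => norm_nonneg _) hbound this
  · -- compactness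
    intro x hx φ hφ
    have hK : IsCompact (closure (H '' Metric.closedBall 0 1)) :=
      hHcpt.isCompact_closure_image_closedBall (𝕜₁ := ℂ) 1
    have hmem : ∀ k, H ((x (φ k) : X)) ∈ closure (H '' Metric.closedBall 0 1) := by
      intro k
      exact subset_closure ⟨(x (φ k) : X), by
        simpa [Metric.mem_closedBall, dist_eq_norm] using hx (φ k), rfl⟩
    obtain ⟨z, _, ψ, hψ, hz⟩ := hK.tendsto_subseq hmem
    refine ⟨ψ, hψ, z, ?_⟩
    have hz' : Tendsto (fun k => ‖H ((x (φ (ψ k)) : X)) - z‖) atTop (𝓝 0) := by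
      rw [← tendsto_iff_norm_sub_tendsto_zero]
      exact hz
    have hbound : ∀ k,
        ‖((Hn (φ (ψ k)) (x (φ (ψ k))) : Yn (φ (ψ k))) : Y) - q (φ (ψ k)) z‖ ≤
          C * ‖H ((x (φ (ψ k)) : X)) - z‖ := by
      intro k
      rw [key]
      calc ‖q (φ (ψ k)) (H ((x (φ (ψ k)) : X))) - q (φ (ψ k)) z‖
          = ‖q (φ (ψ k)) (H ((x (φ (ψ k)) : X)) - z)‖ := by rw [map_sub]
        _ ≤ C * ‖H ((x (φ (ψ k)) : X)) - z‖ := hCn _ _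
    have : Tendsto (fun k => C * ‖H ((x (φ (ψ k)) : X)) - z‖) atTop (𝓝 0) := by
      simpa using hz'.const_mul C
    exact squeeze_zero (fun k => norm_nonneg _) hbound this

end
end
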